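/- arXiv:cond-mat/9211003 — 2 statements merged into one kernel-verified Lean document; each statement's English description precedes it below -/
import Mathlib

section
/- The number of strictly closing (SC) configurations B ⊆ Fin 3 × Fin 3 with exactly k black cells is: 1 for k = 0, 5 for k = 1, 10 for k = 2, 4 for k = 3, 1 for k = 4, and 0 for every k ≥ 5 (these are the coefficients of the combinatorial polynomial Q̄₍₂,₃₎(q) = q⁹ + 5q⁸p + 10q⁷p² + 4q⁶p³ + q⁵p⁴). -/
/-- Face-adjacency on the 3×3 grid: agree in one coordinate, differ by exactly 1 in the other. -/
def Adj3 (a b : Fin 3 × Fin 3) : Prop :=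
  (a.1 = b.1 ∧ (a.2.val + 1 = b.2.val ∨ b.2.val + 1 = a.2.val)) ∨
  (a.2 = b.2 ∧ (a.1.val + 1 = b.1.val ∨ b.1.val + 1 = a.1.val))

/-- A set of cells is connected under face-adjacency. -/
def Connected3 (C : Set (Fin 3 × Fin 3)) : Prop :=
  ∀ x ∈ C, ∀ y ∈ C, Relation.ReflTransGen (fun a b => a ∈ C ∧ b ∈ C ∧ Adj3 a b) x y

/-- The four sides of the 3×3 grid. -/
def Sides3 : Set (Set (Fin 3 × Fin 3)) :=
  {{c | c.1 = 0}, {c | c.1 = 2}, {c | c.2 = 0}, {c | c.2 = 2}}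

/-- A set of black cells is a strictly closing (SC) configuration: no connected subset of it
meets two distinct sides of the grid. -/
def SC3 (B : Set (Fin 3 × Fin 3)) : Prop :=
  ∀ C ⊆ B, Connected3 C →
    ¬ ∃ S₁ ∈ Sides3, ∃ S₂ ∈ Sides3, S₁ ≠ S₂ ∧ (C ∩ S₁).Nonempty ∧ (C ∩ S₂).Nonempty

/-!
A corner lies on two sides, so an SC configuration contains no corner. Every other cell is either
the centre, which lies on no side, or one of the four edge midpoints, each on a side of its own;
the midpoints are pairwise non-adjacent and all adjacent to the centre. Hence `B` is SC iff it
avoids the corners and, when it contains the centre, contains at most one midpoint. These are the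
`choose 4 k` sets of midpoints together with `{centre}` and the four `{centre, midpoint}`.
-/

open Finset Relation

abbrev Cell := Fin 3 × Fin 3

def center3 : Cell := (1, 1)

def IsCorner3 (x : Cell) : Prop := x.1 ≠ 1 ∧ x.2 ≠ 1

instance : DecidablePred IsCorner3 := fun _ => inferInstanceAs (Decidable (_ ∧ _))

instance : DecidableRel Adj3 := fun _ _ => inferInstanceAs (Decidable (_ ∨ _))

theorem adj3_symm : ∀ a b : Cell, Adj3 a b → Adj3 b a := by
  decide

theorem adj3_center3 : ∀ x : Cell, ¬IsCorner3 x → x ≠ center3 → Adj3 x center3 := by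
  decide

theorem not_adj3_of_not_isCorner3 : ∀ x : Cell, ¬IsCorner3 x → x ≠ center3 →
    ∀ y : Cell, ¬IsCorner3 y → y ≠ center3 → ¬Adj3 x y := by
  decide

-- Indexing the sides by `Fin 4` makes "two distinct sides" decidable.
def OnSide3 : Fin 4 → Cell → Prop
  | 0, c => c.1 = 0
  | 1, c => c.1 = 2
  | 2, c => c.2 = 0
  | 3, c => c.2 = 2

instance : ∀ i, DecidablePred (OnSide3 i)
  | 0 => fun c => inferInstanceAs (Decidable (c.1 = 0))
  | 1 => fun c => inferInstanceAs (Decidable (c.1 = 2))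
  | 2 => fun c => inferInstanceAs (Decidable (c.2 = 0))
  | 3 => fun c => inferInstanceAs (Decidable (c.2 = 2))

theorem sides3_eq_range : Sides3 = Set.range fun i => {c | OnSide3 i c} := by
  ext S
  simp [Sides3, Fin.exists_fin_succ, OnSide3, eq_comm]

theorem onSide3_injective : Function.Injective fun i => {c | OnSide3 i c} := by
  intro i j h
  have : ∀ c, OnSide3 i c ↔ OnSide3 j c := fun c => Set.ext_iff.mp h c
  clear h
  revert i j; decide

theorem onSide3_onSide3_iff : ∀ x y : Cell,
    (∃ i j, i ≠ j ∧ OnSide3 i x ∧ OnSide3 j y) ↔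
      x ≠ center3 ∧ y ≠ center3 ∧ (x = y → IsCorner3 x) := by
  decide

theorem meets_two_sides3_iff (C : Set Cell) :
    (∃ S₁ ∈ Sides3, ∃ S₂ ∈ Sides3, S₁ ≠ S₂ ∧ (C ∩ S₁).Nonempty ∧ (C ∩ S₂).Nonempty) ↔
      ∃ x ∈ C, ∃ y ∈ C, x ≠ center3 ∧ y ≠ center3 ∧ (x = y → IsCorner3 x) := by
  simp only [sides3_eq_range, Set.exists_range_iff, onSide3_injective.ne_iff,
    ← onSide3_onSide3_iff]
  constructor
  · rintro ⟨i, j, hij, ⟨x, hxC, hx⟩, ⟨y, hyC, hy⟩⟩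
    exact ⟨x, hxC, y, hyC, i, j, hij, hx, hy⟩
  · rintro ⟨x, hxC, y, hyC, i, j, hij, hx, hy⟩
    exact ⟨i, j, hij, ⟨x, hxC, hx⟩, ⟨y, hyC, hy⟩⟩

theorem connected3_of_adj3 {C : Set Cell} {c : Cell} (hc : c ∈ C)
    (h : ∀ x ∈ C, x ≠ c → Adj3 x c) : Connected3 C := by
  have to_c : ∀ x ∈ C, ReflTransGen (fun a b => a ∈ C ∧ b ∈ C ∧ Adj3 a b) x c ∧
      ReflTransGen (fun a b => a ∈ C ∧ b ∈ C ∧ Adj3 a b) c x := by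
    intro x hx
    rcases eq_or_ne x c with rfl | hxc
    · exact ⟨.refl, .refl⟩
    · exact ⟨.single ⟨hx, hc, h x hx hxc⟩, .single ⟨hc, hx, adj3_symm _ _ (h x hx hxc)⟩⟩
  intro x hx y hy
  exact (to_c x hx).1.trans (to_c y hy).2

theorem Connected3.subsingleton {C : Set Cell} (hC : Connected3 C)
    (h : ∀ x ∈ C, ∀ y ∈ C, ¬Adj3 x y) : C.Subsingleton := by
  intro x hx y hy
  rcases (hC x hx y hy).cases_head with hxy | ⟨z, ⟨-, hz, hxz⟩, -⟩
  · exact hxy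
  · exact absurd hxz (h x hx z hz)

theorem sc3_iff {B : Set Cell} :
    SC3 B ↔ (∀ x ∈ B, ¬IsCorner3 x) ∧ (center3 ∈ B → (B \ {center3}).Subsingleton) := by
  simp only [SC3, meets_two_sides3_iff]
  constructor
  · intro h
    have no_corner : ∀ x ∈ B, ¬IsCorner3 x := by
      intro x hx hx'
      have hxc : x ≠ center3 := by rintro rfl; exact hx'.1 rfl
      exact h {x} (by simpa) (connected3_of_adj3 rfl (by simp))
        ⟨x, rfl, x, rfl, hxc, hxc, fun _ => hx'⟩
    refine ⟨no_corner, fun hc x ⟨hx, hxc⟩ y ⟨hy, hyc⟩ => by_contra fun hxy => ?_⟩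
    have star : Connected3 {center3, x, y} := by
      refine connected3_of_adj3 (Set.mem_insert _ _) ?_
      rintro z (rfl | rfl | rfl) hz
      · exact absurd rfl hz
      · exact adj3_center3 z (no_corner z hx) hxc
      · exact adj3_center3 z (no_corner z hy) hyc
    exact h _ (by simp [Set.insert_subset_iff, *]) star
      ⟨x, by simp, y, by simp, hxc, hyc, fun h => absurd h hxy⟩
  · rintro ⟨no_corner, hcenter⟩ C hCB hC ⟨x, hx, y, hy, hxc, hyc, hcorner⟩
    have hxy : x = y := by
      by_cases hcC : center3 ∈ C
      · exact hcenter (hCB hcC) ⟨hCB hx, hxc⟩ ⟨hCB hy, hyc⟩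
      · refine hC.subsingleton (fun a ha b hb => ?_) hx hy
        exact not_adj3_of_not_isCorner3 a (no_corner a (hCB ha)) (ne_of_mem_of_not_mem ha hcC)
          b (no_corner b (hCB hb)) (ne_of_mem_of_not_mem hb hcC)
    exact no_corner x (hCB hx) (hcorner hxy)

theorem Set.ncard_setOf_eq_card_filter {α : Type*} [Fintype α] {P : Set α → Prop}
    {Q : Finset α → Prop} [DecidablePred Q] (h : ∀ s : Finset α, P s ↔ Q s) :
    {B | P B}.ncard = #{s | Q s} := by
  calc {B | P B}.ncard = Nat.card {s : Finset α // Q s} :=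
        (Nat.card_coe_set_eq _).symm.trans
          (Nat.card_congr (Fintype.finsetEquivSet.subtypeEquiv fun s => (h s).symm)).symm
    _ = #{s | Q s} := by rw [Nat.card_eq_fintype_card, Fintype.card_subtype]

def IsSC3Finset (s : Finset Cell) : Prop :=
  (∀ x ∈ s, ¬IsCorner3 x) ∧ (center3 ∈ s → #(s.erase center3) ≤ 1)

instance : DecidablePred IsSC3Finset := fun _ => inferInstanceAs (Decidable (_ ∧ _))

theorem sc3_coe_iff (s : Finset Cell) : SC3 s ↔ IsSC3Finset s := by
  rw [sc3_iff, IsSC3Finset, card_le_one_iff_subsingleton, coe_erase]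
  simp

theorem ncard_setOf_sc3 (k : ℕ) :
    {B : Set Cell | B.ncard = k ∧ SC3 B}.ncard = #{s : Finset Cell | #s = k ∧ IsSC3Finset s} :=
  Set.ncard_setOf_eq_card_filter fun s => by rw [Set.ncard_coe_finset, sc3_coe_iff]

theorem IsSC3Finset.card_le {s : Finset Cell} (hs : IsSC3Finset s) : #s ≤ 4 := by
  by_cases hc : center3 ∈ s
  · have := card_erase_add_one hc
    have := hs.2 hc
    omega
  · calc #s ≤ #({x | ¬IsCorner3 x ∧ x ≠ center3} : Finset Cell) :=
          card_le_card fun x hx => by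
            simpa using ⟨hs.1 x hx, ne_of_mem_of_not_mem hx hc⟩
      _ = 4 := by decide

theorem ncard_setOf_sc3_eq_zero {k : ℕ} (hk : 5 ≤ k) :
    {B : Set Cell | B.ncard = k ∧ SC3 B}.ncard = 0 := by
  rw [ncard_setOf_sc3, card_eq_zero, filter_eq_empty_iff]
  rintro s - ⟨rfl, hs⟩
  exact absurd hs.card_le (by omega)

/-- The number of SC configurations with exactly k black cells is 1, 5, 10, 4, 1
for k = 0, 1, 2, 3, 4 and 0 for every k ≥ 5. -/
theorem count_strictly_closing_configurations :
    {B : Set (Fin 3 × Fin 3) | B.ncard = 0 ∧ SC3 B}.ncard = 1 ∧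
    {B : Set (Fin 3 × Fin 3) | B.ncard = 1 ∧ SC3 B}.ncard = 5 ∧
    {B : Set (Fin 3 × Fin 3) | B.ncard = 2 ∧ SC3 B}.ncard = 10 ∧
    {B : Set (Fin 3 × Fin 3) | B.ncard = 3 ∧ SC3 B}.ncard = 4 ∧
    {B : Set (Fin 3 × Fin 3) | B.ncard = 4 ∧ SC3 B}.ncard = 1 ∧
    ∀ k : ℕ, 5 ≤ k → {B : Set (Fin 3 × Fin 3) | B.ncard = k ∧ SC3 B}.ncard = 0 := by
  refine ⟨?_, ?_, ?_, ?_, ?_, fun k hk => ncard_setOf_sc3_eq_zero hk⟩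
  all_goals rw [ncard_setOf_sc3]; set_option maxRecDepth 2000 in decide
end

section
/- Fix ζ > 0; on [0,ζ] define ρ(z) = cosh(ζ/2 − z)/cosh(ζ/2), G(z,u) = sinh(min(z,u))·sinh(ζ − max(z,u))/sinh(ζ), Q(p) = 12p⁹ − 31p⁸ + 20p⁷, and define F[φ](z) = ρ(z) + (1 − ρ(z))·∫₀^ζ G(z,u)·Q(φ(u)) du. Let φ₀ = ρ and φ_{n+1} = F[φ_n] for n ≥ 0. Then for every n and every z ∈ [0,ζ]: ρ(z) ≤ φ_n(z) ≤ φ_{n+1}(z) ≤ 1; consequently the sequence (φ_n(z)) converges for every z ∈ [0,ζ] to a limit P(z) with ρ(z) ≤ P(z) ≤ 1. -/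
open Real

/-- Stationary no-branching absorption probability of the simplest model. -/
noncomputable def rhoAbs (ζ z : ℝ) : ℝ := Real.cosh (ζ/2 - z) / Real.cosh (ζ/2)

/-- Stationary first-branching kernel of the simplest model. -/
noncomputable def Gker (ζ z u : ℝ) : ℝ :=
  Real.sinh (min z u) * Real.sinh (ζ - max z u) / Real.sinh ζ

/-- The combinatorial polynomial Q₍₂,₃₎ counting strongly defective configurations. -/
def Qpoly (p : ℝ) : ℝ := 12*p^9 - 31*p^8 + 20*p^7

/-- The renormalization (recoding) operator of the simplest model. -/
noncomputable def Fop (ζ : ℝ) (φ : ℝ → ℝ) (z : ℝ) : ℝ :=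
  rhoAbs ζ z + (1 - rhoAbs ζ z) * ∫ u in (0:ℝ)..ζ, Gker ζ z u * Qpoly (φ u)

/-!
Since `Q` is increasing on `[0,1]` with `Q 0 = 0` and `Q 1 = 1`, and the kernel `G(z, ·)` is
nonnegative with total mass `1 - ρ z`, the operator `F` is monotone on continuous functions with
values in `[0,1]` and maps them to functions between `ρ` and `1`. Starting from `ρ ≤ F[ρ]`, the
iterates therefore increase and stay below `1`, so they converge pointwise.
-/

open Set

lemma hasDerivAt_Qpoly (x : ℝ) :
    HasDerivAt Qpoly (4 * x ^ 6 * (35 - 27 * x) * (1 - x)) x := by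
  refine ((((hasDerivAt_pow 9 x).const_mul 12).sub ((hasDerivAt_pow 8 x).const_mul 31)).add
    ((hasDerivAt_pow 7 x).const_mul 20)).congr_deriv ?_
  push_cast
  ring

lemma continuous_Qpoly : Continuous Qpoly := by
  unfold Qpoly
  fun_prop

lemma Qpoly_monotoneOn : MonotoneOn Qpoly (Icc 0 1) := by
  refine monotoneOn_of_deriv_nonneg (convex_Icc 0 1) continuous_Qpoly.continuousOn
    (fun x _ ↦ (hasDerivAt_Qpoly x).differentiableAt.differentiableWithinAt) fun x hx ↦ ?_
  rw [interior_Icc] at hx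
  rw [(hasDerivAt_Qpoly x).deriv]
  have : 0 ≤ 35 - 27 * x := by linarith [hx.2]
  have : 0 ≤ 1 - x := by linarith [hx.2]
  positivity

lemma Qpoly_mem_Icc {p : ℝ} (hp : p ∈ Icc (0 : ℝ) 1) : Qpoly p ∈ Icc (0 : ℝ) 1 := by
  have h0 := Qpoly_monotoneOn (left_mem_Icc.2 zero_le_one) hp hp.1
  have h1 := Qpoly_monotoneOn hp (right_mem_Icc.2 zero_le_one) hp.2
  norm_num [Qpoly] at h0 h1
  exact ⟨h0, h1⟩

lemma rhoAbs_pos (ζ z : ℝ) : 0 < rhoAbs ζ z :=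
  div_pos (cosh_pos _) (cosh_pos _)

lemma rhoAbs_le_one {ζ z : ℝ} (hz : z ∈ Icc 0 ζ) : rhoAbs ζ z ≤ 1 := by
  obtain ⟨hz0, hzζ⟩ := hz
  rw [rhoAbs, div_le_one (cosh_pos _), cosh_le_cosh, abs_le, abs_of_nonneg (by linarith)]
  constructor <;> linarith

lemma continuous_rhoAbs (ζ : ℝ) : Continuous (rhoAbs ζ) := by
  unfold rhoAbs
  fun_prop

lemma rhoAbs_eq_sinh_add_sinh_div {ζ : ℝ} (hζ : ζ ≠ 0) (z : ℝ) :
    rhoAbs ζ z = (sinh z + sinh (ζ - z)) / sinh ζ := by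
  have hsinh : sinh (ζ / 2) ≠ 0 := by simpa using hζ
  have hdouble : sinh ζ = 2 * sinh (ζ / 2) * cosh (ζ / 2) := by
    rw [← sinh_two_mul, mul_div_cancel₀ ζ two_ne_zero]
  obtain ⟨w, rfl⟩ : ∃ w, z = ζ / 2 - w := ⟨ζ / 2 - z, by ring⟩
  rw [rhoAbs, sub_sub_cancel, show ζ - (ζ / 2 - w) = ζ / 2 + w by ring, sinh_sub, sinh_add, hdouble]
  field_simp
  ring

lemma Gker_nonneg {ζ z u : ℝ} (hz : z ∈ Icc 0 ζ) (hu : u ∈ Icc 0 ζ) : 0 ≤ Gker ζ z u := by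
  have h₁ : 0 ≤ sinh (min z u) := sinh_nonneg_iff.2 (le_min hz.1 hu.1)
  have h₂ : 0 ≤ sinh (ζ - max z u) := sinh_nonneg_iff.2 (sub_nonneg.2 (max_le hz.2 hu.2))
  have h₃ : 0 ≤ sinh ζ := sinh_nonneg_iff.2 (hz.1.trans hz.2)
  unfold Gker
  positivity

lemma continuous_uncurry_Gker (ζ : ℝ) : Continuous (Function.uncurry (Gker ζ)) := by
  unfold Gker Function.uncurry
  fun_prop

lemma integral_sinh (a b : ℝ) : ∫ x in a..b, sinh x = cosh b - cosh a :=
  intervalIntegral.integral_eq_sub_of_hasDerivAt (fun x _ ↦ hasDerivAt_cosh x)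
    (continuous_sinh.intervalIntegrable a b)

lemma integral_Gker {ζ z : ℝ} (hζ : ζ ≠ 0) (hz : z ∈ Icc 0 ζ) :
    ∫ u in (0 : ℝ)..ζ, Gker ζ z u = 1 - rhoAbs ζ z := by
  have hint (a b : ℝ) : IntervalIntegrable (Gker ζ z) MeasureTheory.volume a b :=
    ((continuous_uncurry_Gker ζ).uncurry_left z).intervalIntegrable a b
  have hleft : ∫ u in (0 : ℝ)..z, Gker ζ z u =
      ∫ u in (0 : ℝ)..z, sinh u * (sinh (ζ - z) / sinh ζ) := by
    refine intervalIntegral.integral_congr fun u hu ↦ ?_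
    rw [uIcc_of_le hz.1] at hu
    simp only [Gker, min_eq_right hu.2, max_eq_left hu.2]
    ring
  have hright : ∫ u in z..ζ, Gker ζ z u = ∫ u in z..ζ, sinh (ζ - u) * (sinh z / sinh ζ) := by
    refine intervalIntegral.integral_congr fun u hu ↦ ?_
    rw [uIcc_of_le hz.2] at hu
    simp only [Gker, min_eq_left hu.1, max_eq_right hu.1]
    ring
  rw [← intervalIntegral.integral_add_adjacent_intervals (hint 0 z) (hint z ζ), hleft, hright,
    intervalIntegral.integral_mul_const, intervalIntegral.integral_mul_const,
    intervalIntegral.integral_comp_sub_left (fun x ↦ sinh x), integral_sinh, integral_sinh,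
    sub_self, cosh_zero, rhoAbs_eq_sinh_add_sinh_div hζ]
  have hsinh : sinh ζ ≠ 0 := by simpa using hζ
  have hζz := sinh_add (ζ - z) z
  rw [sub_add_cancel] at hζz
  field_simp
  linear_combination -hζz

lemma integral_Gker_mul_mono {ζ z : ℝ} (hz : z ∈ Icc 0 ζ) {f g : ℝ → ℝ}
    (hf : Continuous f) (hg : Continuous g) (hfg : ∀ u ∈ Icc 0 ζ, f u ≤ g u) :
    ∫ u in (0 : ℝ)..ζ, Gker ζ z u * f u ≤ ∫ u in (0 : ℝ)..ζ, Gker ζ z u * g u := by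
  have hG := (continuous_uncurry_Gker ζ).uncurry_left z
  refine intervalIntegral.integral_mono_on (hz.1.trans hz.2) ((hG.mul hf).intervalIntegrable 0 ζ)
    ((hG.mul hg).intervalIntegrable 0 ζ) fun u hu ↦ ?_
  exact mul_le_mul_of_nonneg_left (hfg u hu) (Gker_nonneg hz hu)

lemma continuous_Fop (ζ : ℝ) {ψ : ℝ → ℝ} (hψ : Continuous ψ) : Continuous (Fop ζ ψ) := by
  have hG : Continuous (Function.uncurry fun z u ↦ Gker ζ z u * Qpoly (ψ u)) :=
    (continuous_uncurry_Gker ζ).mul (continuous_Qpoly.comp (hψ.comp continuous_snd))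
  have hI : Continuous fun z ↦ ∫ u in (0 : ℝ)..ζ, Gker ζ z u * Qpoly (ψ u) :=
    intervalIntegral.continuous_parametric_intervalIntegral_of_continuous' hG 0 ζ
  unfold Fop
  have := continuous_rhoAbs ζ
  fun_prop

lemma Fop_mono {ζ z : ℝ} (hz : z ∈ Icc 0 ζ) {ψ₁ ψ₂ : ℝ → ℝ}
    (hψ₁ : Continuous ψ₁) (hψ₂ : Continuous ψ₂) (hψ₁_mem : ∀ u ∈ Icc 0 ζ, ψ₁ u ∈ Icc (0 : ℝ) 1)
    (hψ₂_mem : ∀ u ∈ Icc 0 ζ, ψ₂ u ∈ Icc (0 : ℝ) 1) (hle : ∀ u ∈ Icc 0 ζ, ψ₁ u ≤ ψ₂ u) :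
    Fop ζ ψ₁ z ≤ Fop ζ ψ₂ z := by
  have hρ : 0 ≤ 1 - rhoAbs ζ z := sub_nonneg.2 (rhoAbs_le_one hz)
  unfold Fop
  gcongr
  exact integral_Gker_mul_mono hz (continuous_Qpoly.comp hψ₁) (continuous_Qpoly.comp hψ₂)
    fun u hu ↦ Qpoly_monotoneOn (hψ₁_mem u hu) (hψ₂_mem u hu) (hle u hu)

lemma Fop_mem_Icc {ζ z : ℝ} (hζ : ζ ≠ 0) (hz : z ∈ Icc 0 ζ) {ψ : ℝ → ℝ} (hψ : Continuous ψ)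
    (hψ_mem : ∀ u ∈ Icc 0 ζ, ψ u ∈ Icc (0 : ℝ) 1) :
    Fop ζ ψ z ∈ Icc (rhoAbs ζ z) 1 := by
  have hQ u (hu : u ∈ Icc 0 ζ) := Qpoly_mem_Icc (hψ_mem u hu)
  have hQψ : Continuous (Qpoly ∘ ψ) := continuous_Qpoly.comp hψ
  have hlow := integral_Gker_mul_mono hz continuous_const hQψ fun u hu ↦ (hQ u hu).1
  have hhigh := integral_Gker_mul_mono hz hQψ continuous_const fun u hu ↦ (hQ u hu).2
  simp only [mul_zero, mul_one, intervalIntegral.integral_zero, integral_Gker hζ hz,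
    Function.comp_apply] at hlow hhigh
  have hρ := rhoAbs_le_one hz
  have hρ' := rhoAbs_pos ζ z
  constructor <;> unfold Fop <;> nlinarith

section Iterates

variable {ζ : ℝ} {φ : ℕ → ℝ → ℝ} (h0 : φ 0 = rhoAbs ζ) (hsucc : ∀ n, φ (n + 1) = Fop ζ (φ n))
include h0 hsucc

lemma continuous_Fop_iterate (n : ℕ) : Continuous (φ n) := by
  induction n with
  | zero => exact h0 ▸ continuous_rhoAbs ζ
  | succ n ih => exact hsucc n ▸ continuous_Fop ζ ih

lemma Fop_iterate_mem_Icc (hζ : ζ ≠ 0) (n : ℕ) {z : ℝ} (hz : z ∈ Icc 0 ζ) :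
    φ n z ∈ Icc (rhoAbs ζ z) 1 := by
  induction n generalizing z with
  | zero => rw [h0]; exact ⟨le_rfl, rhoAbs_le_one hz⟩
  | succ n ih =>
    rw [hsucc]
    exact Fop_mem_Icc hζ hz (continuous_Fop_iterate h0 hsucc n)
      fun u hu ↦ ⟨(rhoAbs_pos ζ u).le.trans (ih hu).1, (ih hu).2⟩

lemma Fop_iterate_le_succ (hζ : ζ ≠ 0) (n : ℕ) {z : ℝ} (hz : z ∈ Icc 0 ζ) :
    φ n z ≤ φ (n + 1) z := by
  have hmem (m : ℕ) (u : ℝ) (hu : u ∈ Icc 0 ζ) : φ m u ∈ Icc (0 : ℝ) 1 :=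
    let h := Fop_iterate_mem_Icc h0 hsucc hζ m hu
    ⟨(rhoAbs_pos ζ u).le.trans h.1, h.2⟩
  induction n generalizing z with
  | zero => exact h0 ▸ (Fop_iterate_mem_Icc h0 hsucc hζ 1 hz).1
  | succ n ih =>
    rw [hsucc n, hsucc (n + 1)]
    exact Fop_mono hz (continuous_Fop_iterate h0 hsucc n) (continuous_Fop_iterate h0 hsucc (n + 1))
      (hmem n) (hmem (n + 1)) fun u hu ↦ ih hu

end Iterates

/-- Iterates φₙ = Fⁿ[ρ] of the recoding operator starting from ρ are monotone
nondecreasing in n, bounded between ρ and 1 on [0,ζ], and hence converge pointwise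
to a limit P with ρ ≤ P ≤ 1. -/
theorem Fop_iterates_converge (ζ : ℝ) (hζ : 0 < ζ) (φ : ℕ → ℝ → ℝ)
    (h0 : φ 0 = rhoAbs ζ) (hsucc : ∀ n, φ (n+1) = Fop ζ (φ n)) :
    (∀ n, ∀ z ∈ Set.Icc (0:ℝ) ζ,
        rhoAbs ζ z ≤ φ n z ∧ φ n z ≤ φ (n+1) z ∧ φ (n+1) z ≤ 1) ∧
    ∃ P : ℝ → ℝ, ∀ z ∈ Set.Icc (0:ℝ) ζ,
        Filter.Tendsto (fun n => φ n z) Filter.atTop (nhds (P z)) ∧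
        rhoAbs ζ z ≤ P z ∧ P z ≤ 1 := by
  have hmem := Fop_iterate_mem_Icc h0 hsucc hζ.ne'
  have hle := Fop_iterate_le_succ h0 hsucc hζ.ne'
  refine ⟨fun n z hz ↦ ⟨(hmem n hz).1, hle n hz, (hmem (n + 1) hz).2⟩,
    fun z ↦ ⨆ n, φ n z, fun z hz ↦ ?_⟩
  have hbdd : BddAbove (range fun n ↦ φ n z) := ⟨1, forall_mem_range.2 fun n ↦ (hmem n hz).2⟩
  exact ⟨tendsto_atTop_ciSup (monotone_nat_of_le_succ fun n ↦ hle n hz) hbdd,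
    (hmem 0 hz).1.trans (le_ciSup hbdd 0), ciSup_le fun n ↦ (hmem n hz).2⟩
end
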